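/- Let T be the (z,θ)-tree and T′ the (z′,θ)-tree built from the same sequence (θ_n)_{n≥0} of finite plane trees but from two (possibly different) sequences z = (z_n) and z′ = (z′_n) of nonnegative integers, so that each v ∈ θ_n is identified with one vertex in each of T and T′. Let ℓ_n (resp. ℓ′_n) denote the height of the backbone vertex of T (resp. T′) to which θ_n is attached. Then for every n and every vertex v of θ_n: (i) |#T^v − #(T′)^v| = |ℓ_n − ℓ′_n|; and (ii) |n(v,T) − n(v,T′)| ≤ max(z_{ℓ_n}, z′_{ℓ′_n}); in fact both n(v,T) − n(v,θ_n) − 1 and n(v,T′) − n(v,θ_n) − 1 lie in [0, z_{ℓ_n} − 1] and [0, z′_{ℓ′_n} − 1] respectively. -/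

import Mathlib

namespace IPC
/-- A plane tree: a set of finite sequences of positive integers (vertices), containing
the root `[]`, closed under prefixes, closed under earlier siblings, with labels ≥ 1. -/
def IsPlaneTree (T : Set (List ℕ)) : Prop :=
  [] ∈ T ∧
  (∀ v ∈ T, ∀ u : List ℕ, u <+: v → u ∈ T) ∧
  (∀ (v : List ℕ) (i j : ℕ), v ++ [i] ∈ T → 1 ≤ j → j ≤ i → v ++ [j] ∈ T) ∧
  (∀ v ∈ T, ∀ i ∈ v, 1 ≤ i)
/-- `kv T v` : number of children of the vertex `v` in `T`. -/
noncomputable def kv (T : Set (List ℕ)) (v : List ℕ) : ℕ := {i : ℕ | v ++ [i] ∈ T}.ncard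
/-- `rank T v` : number of strict lexicographic predecessors of `v` in `T`. -/
noncomputable def rank (T : Set (List ℕ)) (v : List ℕ) : ℕ := {u ∈ T | u < v}.ncard
/-- Lukaciewicz path of `T`: `luk T n = ∑_{i<n} (k_{vⁱ} - 1)` where `vⁱ` is the `i`-th
vertex of `T` in lexicographic order. -/
noncomputable def luk (T : Set (List ℕ)) (n : ℕ) : ℤ :=
  ∑ᶠ v ∈ {u ∈ T | rank T u < n}, ((kv T v : ℤ) - 1)
/-- `T^v`: the set of vertices of `T` lexicographically ≤ `v`. -/
def below (T : Set (List ℕ)) (v : List ℕ) : Set (List ℕ) := {u ∈ T | u ≤ v}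
/-- `nEdge T v = n(v,T)`: the number of edges of `T` with exactly one endpoint in `T^v`;
an edge is identified with its child endpoint. -/
noncomputable def nEdge (T : Set (List ℕ)) (v : List ℕ) : ℕ :=
  {c ∈ T | c ≠ [] ∧ Xor' (c.dropLast ∈ below T v) (c ∈ below T v)}.ncard

/-- Address of the backbone vertex `BB_i` of a `(z,θ)`-tree: `BB_i` has `1 + z i`
children, the last of which is `BB_{i+1}`. -/
def bbz (z : ℕ → ℕ) : ℕ → List ℕ
  | 0 => []
  | i + 1 => bbz z i ++ [z i + 1]

/-- `cum z i = ∑_{m < i} z m`. -/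
def cum (z : ℕ → ℕ) (i : ℕ) : ℕ := ∑ m ∈ Finset.range i, z m

/-- `ell z n = ℓ_n`: the height of the backbone vertex to which `θ n` is attached,
i.e. the unique `i` with `cum z i ≤ n < cum z (i+1)` (when `∑ z` diverges). -/
noncomputable def ell (z : ℕ → ℕ) (n : ℕ) : ℕ := sInf {i : ℕ | n < cum z (i + 1)}

/-- `graftPt z n = u_n`: the `n`-th non-backbone child of a backbone vertex in
lexicographic order; the root of the copy of `θ n`. -/
noncomputable def graftPt (z : ℕ → ℕ) (n : ℕ) : List ℕ :=
  bbz z (ell z n) ++ [n - cum z (ell z n) + 1]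

/-- The `(z,θ)`-tree: the sin-tree whose backbone is its rightmost branch, in which
`BB_i` has `1 + z i` children (the last being `BB_{i+1}`), and in which the subtree
rooted at the `n`-th non-backbone child `u_n` of a backbone vertex is a copy of `θ n`. -/
noncomputable def zTree (z : ℕ → ℕ) (θ : ℕ → Set (List ℕ)) : Set (List ℕ) :=
  Set.range (bbz z) ∪ ⋃ n, (fun w => graftPt z n ++ w) '' θ n

/-! In depth-first order the grafted vertices `u_m ++ u` are ordered lexicographically by
`(m, u)`, and `BB_i` precedes `u_n ++ w` iff `i ≤ ℓ_n`. So the vertices up to `v = u_n ++ w` are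
`BB_0, …, BB_{ℓ_n}` together with a set of pairs `(m, u)` that does not depend on `z`, whence
`#T^v = ℓ_n + 1 + D` with the same `D` for `z` and `z'`. The edges leaving `T^v` are the copies of
those leaving `θ_n^w`, the edges from `BB_{ℓ_n}` to `u_m` for `n < m < cum z (ℓ_n + 1)`, and the
edge to `BB_{ℓ_n + 1}`; hence `n(v,T) = n(w,θ_n) + cum z (ℓ_n + 1) - n`, and
`cum z ℓ_n ≤ n < cum z ℓ_n + z ℓ_n` puts `cum z (ℓ_n + 1) - n` in `[1, z ℓ_n]`. -/

theorem strictMono_append_left {α : Type*} [LinearOrder α] (a : List α) :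
    StrictMono (a ++ · : List α → List α) :=
  fun _ _ h => List.append_left_lt h

theorem le_of_prefix {α : Type*} [LinearOrder α] {u v : List α} (h : u <+: v) : u ≤ v := by
  obtain ⟨_ | ⟨a, t⟩, rfl⟩ := h
  · simp
  · simpa using (strictMono_append_left u (List.nil_lt_cons a t)).le

section Backbone

variable (z : ℕ → ℕ)

theorem bbz_length (i : ℕ) : (bbz z i).length = i := by
  induction i with
  | zero => rfl
  | succ i ih => simp [bbz, ih]

theorem bbz_injective : Function.Injective (bbz z) := fun i j h => by
  rw [← bbz_length z i, h, bbz_length]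

theorem bbz_ne_nil {i : ℕ} (hi : i ≠ 0) : bbz z i ≠ [] := by
  rw [← List.length_pos_iff, bbz_length]
  exact Nat.pos_of_ne_zero hi

theorem bbz_prefix_bbz {i j : ℕ} (h : i ≤ j) : bbz z i <+: bbz z j := by
  induction h with
  | refl => exact List.prefix_refl _
  | step _ ih => exact ih.trans (List.prefix_append _ _)

theorem bbz_eq_append_cons {i j : ℕ} (h : i < j) : ∃ r, bbz z j = bbz z i ++ (z i + 1) :: r := by
  obtain ⟨r, hr⟩ := bbz_prefix_bbz z (Nat.succ_le_of_lt h)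
  exact ⟨r, by simp [← hr, bbz]⟩

theorem cum_succ (i : ℕ) : cum z (i + 1) = cum z i + z i :=
  Finset.sum_range_succ z i

theorem cum_mono : Monotone (cum z) := fun _ _ h =>
  Finset.sum_le_sum_of_subset (Finset.range_subset_range.mpr h)

theorem ell_le_of_lt_cum {n i : ℕ} (h : n < cum z (i + 1)) : ell z n ≤ i :=
  Nat.sInf_le h

variable {z}

theorem ell_spec (hz : ∀ N : ℕ, ∃ i : ℕ, N < cum z i) (n : ℕ) :
    cum z (ell z n) ≤ n ∧ n < cum z (ell z n + 1) := by
  have hne : {i : ℕ | n < cum z (i + 1)}.Nonempty := by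
    obtain ⟨i, hi⟩ := hz n
    exact ⟨i, hi.trans_le (cum_mono z i.le_succ)⟩
  refine ⟨?_, Nat.sInf_mem hne⟩
  rcases Nat.eq_zero_or_pos (ell z n) with h | h
  · simp [h, cum]
  · obtain ⟨k, hk⟩ := Nat.exists_eq_add_of_lt h
    have := Nat.notMem_of_lt_sInf (show k < ell z n by omega)
    simpa [hk] using this

theorem ell_mono (hz : ∀ N : ℕ, ∃ i : ℕ, N < cum z i) : Monotone (ell z) := fun _ b h =>
  ell_le_of_lt_cum z (h.trans_lt (ell_spec hz b).2)

end Backbone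

section Graft

variable {z : ℕ → ℕ}

theorem graftPt_append (n : ℕ) (w : List ℕ) :
    graftPt z n ++ w = bbz z (ell z n) ++ (n - cum z (ell z n) + 1) :: w := by
  simp [graftPt]

theorem graftPt_dropLast (n : ℕ) : (graftPt z n).dropLast = bbz z (ell z n) :=
  List.dropLast_concat

theorem graftPt_ne_nil (n : ℕ) : graftPt z n ≠ [] := by
  simp [graftPt]

theorem bbz_le_graftPt_append {i n : ℕ} (h : i ≤ ell z n) (w : List ℕ) :
    bbz z i ≤ graftPt z n ++ w := by
  have : bbz z i <+: graftPt z n ++ w :=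
    (bbz_prefix_bbz z h).trans ((List.prefix_append _ _).trans (List.prefix_append _ w))
  exact le_of_prefix this

-- The label of `u_n` is at most `z ℓ_n`, below the label `z ℓ_n + 1` of the backbone child.
theorem graftPt_append_lt_bbz (hz : ∀ N : ℕ, ∃ i : ℕ, N < cum z i) {n i : ℕ}
    (h : ell z n < i) (w : List ℕ) : graftPt z n ++ w < bbz z i := by
  obtain ⟨r, hr⟩ := bbz_eq_append_cons z h
  have := ell_spec hz n
  have := cum_succ z (ell z n)
  rw [graftPt_append, hr]
  exact List.append_left_lt (List.Lex.rel (by omega))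

theorem bbz_le_graftPt_append_iff (hz : ∀ N : ℕ, ∃ i : ℕ, N < cum z i) (i n : ℕ)
    (w : List ℕ) : bbz z i ≤ graftPt z n ++ w ↔ i ≤ ell z n :=
  ⟨fun h => not_lt.mp fun hi => (graftPt_append_lt_bbz hz hi w).not_ge h,
    fun h => bbz_le_graftPt_append h w⟩

theorem graftPt_append_ne_bbz (hz : ∀ N : ℕ, ∃ i : ℕ, N < cum z i) (m : ℕ) (s : List ℕ)
    (i : ℕ) : graftPt z m ++ s ≠ bbz z i := by
  intro h
  have hi : ell z m < i := by
    have := congrArg List.length h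
    simp only [List.length_append, graftPt, bbz_length, List.length_singleton] at this
    omega
  exact (graftPt_append_lt_bbz hz hi s).ne h

theorem graftPt_append_lt_graftPt_append (hz : ∀ N : ℕ, ∃ i : ℕ, N < cum z i) {m m' : ℕ}
    (h : m < m') (s t : List ℕ) : graftPt z m ++ s < graftPt z m' ++ t := by
  rcases (ell_mono hz h.le).eq_or_lt with he | hlt
  · have := ell_spec hz m
    rw [graftPt_append, graftPt_append, ← he]
    exact List.append_left_lt (List.Lex.rel (by omega))
  · exact (graftPt_append_lt_bbz hz hlt s).trans_le (bbz_le_graftPt_append le_rfl t)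

variable (z) in
noncomputable def graftVertex (p : ℕ × List ℕ) : List ℕ := graftPt z p.1 ++ p.2

theorem strictMono_graftVertex (hz : ∀ N : ℕ, ∃ i : ℕ, N < cum z i) :
    StrictMono (graftVertex z ∘ ofLex) := by
  intro p q h
  rcases Prod.Lex.lt_iff.mp h with h | ⟨he, h⟩
  · exact graftPt_append_lt_graftPt_append hz h _ _
  · simp only [Function.comp_apply, graftVertex, he]
    exact strictMono_append_left _ h

theorem graftVertex_le_graftVertex_iff (hz : ∀ N : ℕ, ∃ i : ℕ, N < cum z i)
    (p q : ℕ × List ℕ) : graftVertex z p ≤ graftVertex z q ↔ toLex p ≤ toLex q :=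
  (strictMono_graftVertex hz).le_iff_le

theorem graftVertex_lt_graftVertex_iff (hz : ∀ N : ℕ, ∃ i : ℕ, N < cum z i)
    (p q : ℕ × List ℕ) : graftVertex z p < graftVertex z q ↔ toLex p < toLex q :=
  (strictMono_graftVertex hz).lt_iff_lt

theorem graftVertex_injective (hz : ∀ N : ℕ, ∃ i : ℕ, N < cum z i) :
    Function.Injective (graftVertex z) :=
  (strictMono_graftVertex hz).injective.comp toLex.injective

end Graft

section Tree

variable {z : ℕ → ℕ} {θ : ℕ → Set (List ℕ)}

theorem zTree_eq : zTree z θ = Set.range (bbz z) ∪ graftVertex z '' {p | p.2 ∈ θ p.1} := by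
  ext x
  simp [zTree, graftVertex]

theorem dropLast_mem_zTree (hθ : ∀ m, IsPlaneTree (θ m)) {c : List ℕ} (hc : c ∈ zTree z θ)
    (hne : c ≠ []) : c.dropLast ∈ zTree z θ := by
  rw [zTree_eq] at hc ⊢
  rcases hc with ⟨_ | i, rfl⟩ | ⟨⟨m, u⟩, hu, rfl⟩
  · exact absurd rfl hne
  · exact .inl ⟨i, List.dropLast_concat.symm⟩
  · rcases eq_or_ne u [] with rfl | hu'
    · simp [graftVertex, graftPt_dropLast]
    · refine .inr ⟨(m, u.dropLast), (hθ m).2.1 u hu _ u.dropLast_prefix, ?_⟩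
      simp [graftVertex, List.dropLast_append_of_ne_nil hu']

theorem ncard_sep_zTree (hz : ∀ N : ℕ, ∃ i : ℕ, N < cum z i) (P : List ℕ → Prop)
    (hB : {i | P (bbz z i)}.Finite)
    (hG : {p : ℕ × List ℕ | p.2 ∈ θ p.1 ∧ P (graftVertex z p)}.Finite) :
    {x ∈ zTree z θ | P x}.ncard
      = {i | P (bbz z i)}.ncard + {p : ℕ × List ℕ | p.2 ∈ θ p.1 ∧ P (graftVertex z p)}.ncard := by
  have hsplit : {x ∈ zTree z θ | P x}
      = bbz z '' {i | P (bbz z i)} ∪ graftVertex z '' {p | p.2 ∈ θ p.1 ∧ P (graftVertex z p)} := by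
    ext x
    rw [zTree_eq]
    constructor
    · rintro ⟨⟨i, rfl⟩ | ⟨p, hp, rfl⟩, hx⟩
      exacts [.inl ⟨i, hx, rfl⟩, .inr ⟨p, ⟨hp, hx⟩, rfl⟩]
    · rintro (⟨i, hi, rfl⟩ | ⟨p, ⟨hp, hx⟩, rfl⟩)
      exacts [⟨.inl ⟨i, rfl⟩, hi⟩, ⟨.inr ⟨p, hp, rfl⟩, hx⟩]
  have hdisj : Disjoint (bbz z '' {i | P (bbz z i)})
      (graftVertex z '' {p | p.2 ∈ θ p.1 ∧ P (graftVertex z p)}) := by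
    rw [Set.disjoint_left]
    rintro _ ⟨i, -, rfl⟩ ⟨p, -, hp⟩
    exact graftPt_append_ne_bbz hz p.1 p.2 i hp
  rw [hsplit, Set.ncard_union_eq hdisj (hB.image _) (hG.image _),
    Set.ncard_image_of_injective _ (bbz_injective z),
    Set.ncard_image_of_injective _ (graftVertex_injective hz)]

theorem finite_setOf_toLex_le (hfin : ∀ m, (θ m).Finite) (q : ℕ × List ℕ) :
    {p : ℕ × List ℕ | p.2 ∈ θ p.1 ∧ toLex p ≤ toLex q}.Finite := by
  refine ((Set.finite_Iic q.1).prod ((Set.finite_Iic q.1).biUnion fun m _ => hfin m)).subset ?_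
  rintro ⟨m, u⟩ ⟨hu, hle⟩
  have hm : m ≤ q.1 := by
    rcases Prod.Lex.toLex_le_toLex.mp hle with h | ⟨h, -⟩
    exacts [h.le, h.le]
  exact ⟨hm, Set.mem_biUnion hm hu⟩

theorem ncard_zTree_le_graftPt_append (hz : ∀ N : ℕ, ∃ i : ℕ, N < cum z i)
    (hfin : ∀ m, (θ m).Finite) (n : ℕ) (w : List ℕ) :
    {x ∈ zTree z θ | x ≤ graftPt z n ++ w}.ncard
      = ell z n + 1 + {p : ℕ × List ℕ | p.2 ∈ θ p.1 ∧ toLex p ≤ toLex (n, w)}.ncard := by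
  have hB : {i | bbz z i ≤ graftPt z n ++ w} = Set.Iic (ell z n) := by
    ext i
    exact bbz_le_graftPt_append_iff hz i n w
  have hG : {p : ℕ × List ℕ | p.2 ∈ θ p.1 ∧ graftVertex z p ≤ graftPt z n ++ w}
      = {p : ℕ × List ℕ | p.2 ∈ θ p.1 ∧ toLex p ≤ toLex (n, w)} := by
    ext p
    exact and_congr_right fun _ => graftVertex_le_graftVertex_iff hz p (n, w)
  rw [ncard_sep_zTree hz _ (hB ▸ Set.finite_Iic _) (hG ▸ finite_setOf_toLex_le hfin (n, w)),
    hB, hG, ← Finset.coe_Iic, Set.ncard_coe_finset, Nat.card_Iic]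

end Tree

-- The edges of `T` leaving `T^v`, each identified with its child endpoint.
def exitSet (T : Set (List ℕ)) (v : List ℕ) : Set (List ℕ) :=
  {c ∈ T | c ≠ [] ∧ c.dropLast ≤ v ∧ v < c}

-- Since a parent precedes its child, an edge with exactly one endpoint in `T^v` leaves it.
theorem nEdge_eq_ncard_exitSet {T : Set (List ℕ)} (hT : ∀ c ∈ T, c ≠ [] → c.dropLast ∈ T)
    (v : List ℕ) : nEdge T v = (exitSet T v).ncard := by
  unfold nEdge exitSet below
  congr 1
  ext c
  constructor
  · rintro ⟨hc, hne, ⟨⟨-, hd⟩, h⟩ | ⟨⟨-, hcv⟩, h⟩⟩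
    · exact ⟨hc, hne, hd, not_le.mp fun hcv => h ⟨hc, hcv⟩⟩
    · exact absurd ⟨hT c hc hne, (le_of_prefix c.dropLast_prefix).trans hcv⟩ h
  · rintro ⟨hc, hne, hd, hvc⟩
    exact ⟨hc, hne, .inl ⟨⟨hT c hc hne, hd⟩, fun h => not_le.mpr hvc h.2⟩⟩

section Edges

variable {z : ℕ → ℕ} {θ : ℕ → Set (List ℕ)}

theorem bbz_exits_iff (hz : ∀ N : ℕ, ∃ i : ℕ, N < cum z i) (i n : ℕ) (w : List ℕ) :
    (bbz z i ≠ [] ∧ (bbz z i).dropLast ≤ graftPt z n ++ w ∧ graftPt z n ++ w < bbz z i)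
      ↔ i = ell z n + 1 := by
  rcases i with _ | i
  · simp [bbz]
  · have hd : (bbz z (i + 1)).dropLast = bbz z i := List.dropLast_concat
    rw [hd, ← not_le, bbz_le_graftPt_append_iff hz, bbz_le_graftPt_append_iff hz]
    simp only [ne_eq, bbz_ne_nil z i.succ_ne_zero, not_false_eq_true, true_and]
    omega

theorem graftPt_exits_iff (hz : ∀ N : ℕ, ∃ i : ℕ, N < cum z i) (m n : ℕ) (w : List ℕ) :
    ((graftPt z m).dropLast ≤ graftPt z n ++ w ∧ graftPt z n ++ w < graftPt z m)
      ↔ n < m ∧ m < cum z (ell z n + 1) := by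
  have hlt : graftPt z n ++ w < graftPt z m ↔ n < m := by
    simpa [graftVertex, Prod.Lex.toLex_lt_toLex] using
      graftVertex_lt_graftVertex_iff hz (n, w) (m, [])
  rw [graftPt_dropLast, bbz_le_graftPt_append_iff hz, hlt]
  constructor
  · rintro ⟨hle, hnm⟩
    have he : ell z m = ell z n := le_antisymm hle (ell_mono hz hnm.le)
    exact ⟨hnm, he ▸ (ell_spec hz m).2⟩
  · rintro ⟨hnm, hm⟩
    exact ⟨ell_le_of_lt_cum z hm, hnm⟩

theorem graftVertex_exits_iff (hz : ∀ N : ℕ, ∃ i : ℕ, N < cum z i) {m : ℕ} {u : List ℕ}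
    (hu : u ≠ []) (n : ℕ) (w : List ℕ) :
    ((graftVertex z (m, u)).dropLast ≤ graftVertex z (n, w)
        ∧ graftVertex z (n, w) < graftVertex z (m, u))
      ↔ m = n ∧ u.dropLast ≤ w ∧ w < u := by
  have hd : (graftVertex z (m, u)).dropLast = graftVertex z (m, u.dropLast) :=
    List.dropLast_append_of_ne_nil hu
  simp only [hd, graftVertex_le_graftVertex_iff hz, graftVertex_lt_graftVertex_iff hz,
    Prod.Lex.toLex_le_toLex, Prod.Lex.toLex_lt_toLex]
  constructor
  · rintro ⟨h | ⟨hm, h⟩, h' | ⟨hm', h'⟩⟩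
    · omega
    · omega
    · omega
    · exact ⟨hm, h, h'⟩
  · rintro ⟨rfl, h, h'⟩
    exact ⟨.inr ⟨rfl, h⟩, .inr ⟨rfl, h'⟩⟩

-- Besides the copies of the exits of `θ n`, the grafted exits of `T^{u_n ++ w}` are the later
-- children `u_m`, `n < m < cum z (ℓ_n + 1)`, of `BB_{ℓ_n}`.
theorem setOf_graftVertex_exits_eq (hz : ∀ N : ℕ, ∃ i : ℕ, N < cum z i)
    (hroot : ∀ m, [] ∈ θ m) (n : ℕ) (w : List ℕ) :
    {p : ℕ × List ℕ | p.2 ∈ θ p.1 ∧ (graftVertex z p ≠ [] ∧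
        (graftVertex z p).dropLast ≤ graftPt z n ++ w ∧ graftPt z n ++ w < graftVertex z p)}
      = (fun m => (m, [])) '' Set.Ioo n (cum z (ell z n + 1)) ∪ Prod.mk n '' exitSet (θ n) w := by
  ext ⟨m, u⟩
  rcases eq_or_ne u [] with rfl | hu
  · have := graftPt_exits_iff hz m n w
    simp [graftVertex, graftPt_ne_nil, exitSet, hroot m, this]
  · have := graftVertex_exits_iff hz (m := m) hu n w
    simp only [graftVertex] at this
    simp only [Set.mem_ofPred_eq, Set.mem_union, Set.mem_image, Prod.mk.injEq, exitSet,
      graftVertex, ne_eq, List.append_eq_nil_iff, graftPt_ne_nil, false_and, not_false_eq_true,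
      this, true_and]
    constructor
    · rintro ⟨hu', rfl, h⟩
      exact .inr ⟨u, ⟨⟨hu', hu, h⟩, rfl, rfl⟩⟩
    · rintro (⟨_, -, -, rfl⟩ | ⟨u, ⟨hu', -, h⟩, rfl, rfl⟩)
      exacts [absurd rfl hu, ⟨hu', rfl, h⟩]

theorem ncard_exitSet_zTree (hz : ∀ N : ℕ, ∃ i : ℕ, N < cum z i)
    (hroot : ∀ m, [] ∈ θ m) {n : ℕ} (hfin : (θ n).Finite) (w : List ℕ) :
    (exitSet (zTree z θ) (graftPt z n ++ w)).ncard
      = (exitSet (θ n) w).ncard + (cum z (ell z n + 1) - n) := by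
  have hB : {i | bbz z i ≠ [] ∧ (bbz z i).dropLast ≤ graftPt z n ++ w ∧
      graftPt z n ++ w < bbz z i} = {ell z n + 1} := by
    ext i
    exact bbz_exits_iff hz i n w
  have hG := setOf_graftVertex_exits_eq hz hroot n w
  have hdisj : Disjoint ((fun m => (m, [])) '' Set.Ioo n (cum z (ell z n + 1)))
      (Prod.mk n '' exitSet (θ n) w) := by
    rw [Set.disjoint_left]
    rintro _ ⟨m, -, rfl⟩ ⟨u, hu, he⟩
    exact hu.2.1 (congrArg Prod.snd he)
  have hfin_exit : (exitSet (θ n) w).Finite := hfin.subset fun _ h => h.1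
  rw [exitSet, ncard_sep_zTree hz _ (hB ▸ Set.finite_singleton _)
      (hG ▸ ((Set.finite_Ioo _ _).image _).union (hfin_exit.image _)),
    hB, hG, Set.ncard_singleton, Set.ncard_union_eq hdisj ((Set.finite_Ioo _ _).image _)
      (hfin_exit.image _),
    Set.ncard_image_of_injective _ fun _ _ h => congrArg Prod.fst h,
    Set.ncard_image_of_injective _ (Prod.mk_right_injective n), ← Finset.coe_Ioo,
    Set.ncard_coe_finset, Nat.card_Ioo]
  have := (ell_spec hz n).2
  omega

theorem nEdge_zTree (hz : ∀ N : ℕ, ∃ i : ℕ, N < cum z i) (hθ : ∀ m, IsPlaneTree (θ m))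
    {n : ℕ} (hfin : (θ n).Finite) (w : List ℕ) :
    nEdge (zTree z θ) (graftPt z n ++ w) = nEdge (θ n) w + (cum z (ell z n + 1) - n) := by
  rw [nEdge_eq_ncard_exitSet fun c hc hne => dropLast_mem_zTree hθ hc hne,
    nEdge_eq_ncard_exitSet fun c hc _ => (hθ n).2.1 c hc _ c.dropLast_prefix,
    ncard_exitSet_zTree hz (fun m => (hθ m).1) hfin]

theorem nEdge_zTree_sub_mem_Icc (hz : ∀ N : ℕ, ∃ i : ℕ, N < cum z i)
    (hθ : ∀ m, IsPlaneTree (θ m)) {n : ℕ} (hfin : (θ n).Finite) (w : List ℕ) :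
    (nEdge (zTree z θ) (graftPt z n ++ w) : ℤ) - nEdge (θ n) w ∈ Set.Icc 1 (z (ell z n) : ℤ) := by
  have := ell_spec hz n
  have := cum_succ z (ell z n)
  rw [nEdge_zTree hz hθ hfin, Set.mem_Icc]
  omega

end Edges

/-- Comparison of the `(z,θ)`-tree `T` and the `(z',θ)`-tree `T'`
built from the same trees `θ n` but different backbone-degree sequences `z, z'`.
For a vertex `w` of `θ n`, identified with `v = u_n ++ w` in `T` and `v' = u'_n ++ w`
in `T'`:
(i) `|#T^v − #T'^{v'}| = |ℓ_n − ℓ'_n|`;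
(ii) both `n(v,T) − n(w,θ_n) − 1 ∈ [0, z_{ℓ_n} − 1]` and
`n(v',T') − n(w,θ_n) − 1 ∈ [0, z'_{ℓ'_n} − 1]`; hence
`|n(v,T) − n(v',T')| ≤ max (z_{ℓ_n}) (z'_{ℓ'_n})`. -/
theorem zTree_compare (z z' : ℕ → ℕ) (θ : ℕ → Set (List ℕ))
    (hθ : ∀ n, IsPlaneTree (θ n)) (hfin : ∀ n, (θ n).Finite)
    (hz : ∀ N : ℕ, ∃ i : ℕ, N < cum z i) (hz' : ∀ N : ℕ, ∃ i : ℕ, N < cum z' i) :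
    ∀ n : ℕ, ∀ w ∈ θ n,
      (|({x ∈ zTree z θ | x ≤ graftPt z n ++ w}.ncard : ℤ)
          - ({x ∈ zTree z' θ | x ≤ graftPt z' n ++ w}.ncard : ℤ)|
        = |(ell z n : ℤ) - (ell z' n : ℤ)|) ∧
      (0 ≤ (nEdge (zTree z θ) (graftPt z n ++ w) : ℤ) - (nEdge (θ n) w : ℤ) - 1 ∧
        (nEdge (zTree z θ) (graftPt z n ++ w) : ℤ) - (nEdge (θ n) w : ℤ) - 1
          ≤ (z (ell z n) : ℤ) - 1) ∧
      (0 ≤ (nEdge (zTree z' θ) (graftPt z' n ++ w) : ℤ) - (nEdge (θ n) w : ℤ) - 1 ∧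
        (nEdge (zTree z' θ) (graftPt z' n ++ w) : ℤ) - (nEdge (θ n) w : ℤ) - 1
          ≤ (z' (ell z' n) : ℤ) - 1) ∧
      |(nEdge (zTree z θ) (graftPt z n ++ w) : ℤ)
          - (nEdge (zTree z' θ) (graftPt z' n ++ w) : ℤ)|
        ≤ max (z (ell z n) : ℤ) (z' (ell z' n) : ℤ) := by
  intro n w _
  obtain ⟨h₁, h₂⟩ := nEdge_zTree_sub_mem_Icc hz hθ (hfin n) w
  obtain ⟨h₁', h₂'⟩ := nEdge_zTree_sub_mem_Icc hz' hθ (hfin n) w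
  refine ⟨?_, ⟨by omega, by omega⟩, ⟨by omega, by omega⟩, abs_le.mpr ⟨by omega, by omega⟩⟩
  rw [ncard_zTree_le_graftPt_append hz hfin, ncard_zTree_le_graftPt_append hz' hfin]
  push_cast
  ring_nf

end IPC
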